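/- arXiv:0909.1107 — 2 statements merged into one kernel-verified Lean document; each statement's English description precedes it below -/
import Mathlib

section
/- Let h be a closed, semibounded (below) sesquilinear form on a Hilbert space with dense domain D(h), and let H be the associated self-adjoint operator. If there exists a sequence (u_n) in D(h) with ‖u_n‖ → 1 and sup { |h[u_n, v] − λ(u_n, v)| : v ∈ D(h), ‖v‖_h ≤ 1 } → 0 as n → ∞, then λ ∈ σ(H). Here ‖v‖_h² = h[v,v] + C‖v‖² for a constant C making the form nonnegative. -/
open Filter

/-- Form version of Weyl's criterion (easy direction): if `h[u,v] = ⟪H u, v⟫` is the closed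
semibounded form of the self-adjoint operator `H` (here `h + C ≥ 1`, with form norm
`‖v‖_h² = h[v,v] + C‖v‖²`) and there is a sequence `(uₙ)` with `‖uₙ‖ → 1` and
`sup { |h[uₙ,v] - λ(uₙ,v)| : ‖v‖_h ≤ 1 } → 0`, then `λ ∈ σ(H)`. -/
theorem stmt4 {V : Type*} [NormedAddCommGroup V] [InnerProductSpace ℂ V] [CompleteSpace V]
    (H : V →L[ℂ] V) (hH : IsSelfAdjoint H) (C : ℝ)
    (hC : ∀ v : V, ‖v‖ ^ 2 ≤ (inner ℂ (H v) v : ℂ).re + C * ‖v‖ ^ 2)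
    (lam : ℝ) (u : ℕ → V)
    (hu : Tendsto (fun n => ‖u n‖) atTop (nhds 1))
    (ε : ℕ → ℝ) (hε : Tendsto ε atTop (nhds 0))
    (hweak : ∀ n, ∀ v : V,
      Real.sqrt ((inner ℂ (H v) v : ℂ).re + C * ‖v‖ ^ 2) ≤ 1 →
      ‖(inner ℂ (H (u n)) v : ℂ) - (lam : ℂ) * inner ℂ (u n) v‖ ≤ ε n) :
    (lam : ℂ) ∈ spectrum ℂ H := by
  by_contra hspec
  rw [spectrum.notMem_iff] at hspec
  obtain ⟨T, hT⟩ := hspec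
  set w : ℕ → V := fun n => H (u n) - (lam : ℂ) • u n with hw
  -- ε n is nonnegative
  have hε0 : ∀ n, 0 ≤ ε n := by
    intro n
    have h := hweak n 0
    simpa using h
  -- bound for the quadratic form
  have hQle : ∀ v : V, ((inner ℂ (H v) v : ℂ)).re + C * ‖v‖ ^ 2 ≤ (‖H‖ + C) * ‖v‖ ^ 2 := by
    intro v
    have h1 : ((inner ℂ (H v) v : ℂ)).re ≤ ‖H‖ * ‖v‖ ^ 2 := by
      calc ((inner ℂ (H v) v : ℂ)).re ≤ ‖(inner ℂ (H v) v : ℂ)‖ := Complex.re_le_norm _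
        _ ≤ ‖H v‖ * ‖v‖ := norm_inner_le_norm _ _
        _ ≤ (‖H‖ * ‖v‖) * ‖v‖ := by gcongr; exact H.le_opNorm _
        _ = ‖H‖ * ‖v‖ ^ 2 := by ring
    nlinarith [sq_nonneg ‖v‖]
  set K := Real.sqrt (‖H‖ + C) with hKdef
  -- inner product identity
  have hinner : ∀ n (v : V), (inner ℂ (H (u n)) v : ℂ) - (lam : ℂ) * inner ℂ (u n) v
      = inner ℂ (w n) v := by
    intro n v
    simp only [hw, inner_sub_left, inner_smul_left, Complex.conj_ofReal]
  -- the key norm estimate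
  have key : ∀ n, ‖w n‖ ≤ ε n * K := by
    intro n
    rcases eq_or_ne (w n) 0 with h0 | h0
    · rw [h0, norm_zero]
      exact mul_nonneg (hε0 n) (Real.sqrt_nonneg _)
    · have hwpos : 0 < ‖w n‖ := norm_pos_iff.mpr h0
      have hHC1 : 1 ≤ ‖H‖ + C := by
        have h1 := hC (w n)
        have h2 := hQle (w n)
        nlinarith [sq_nonneg ‖w n‖, mul_pos hwpos hwpos, pow_pos hwpos 2]
      have hKpos : 0 < K := Real.sqrt_pos.mpr (by linarith)
      have hK2 : K ^ 2 = ‖H‖ + C := Real.sq_sqrt (by linarith)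
      set t : ℝ := (K * ‖w n‖)⁻¹ with htdef
      have htpos : 0 < t := by positivity
      set v : V := (t : ℂ) • w n with hvdef
      -- the quadratic form of v
      have hQv : ((inner ℂ (H v) v : ℂ)).re + C * ‖v‖ ^ 2
          = t ^ 2 * (((inner ℂ (H (w n)) (w n) : ℂ)).re + C * ‖w n‖ ^ 2) := by
        have h1 : (inner ℂ (H v) v : ℂ) = ((t : ℂ) * (t : ℂ)) * inner ℂ (H (w n)) (w n) := by
          rw [hvdef, map_smul, inner_smul_left, inner_smul_right, Complex.conj_ofReal]
          ring
        have h2 : ‖v‖ ^ 2 = t ^ 2 * ‖w n‖ ^ 2 := by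
          rw [hvdef, norm_smul, Complex.norm_real, Real.norm_eq_abs,
            abs_of_pos htpos, mul_pow]
        rw [h1, h2, ← Complex.ofReal_mul, Complex.re_ofReal_mul]
        ring
      have hform : Real.sqrt (((inner ℂ (H v) v : ℂ)).re + C * ‖v‖ ^ 2) ≤ 1 := by
        rw [hQv]
        have hle : t ^ 2 * (((inner ℂ (H (w n)) (w n) : ℂ)).re + C * ‖w n‖ ^ 2) ≤ 1 := by
          have := hQle (w n)
          have h3 : t ^ 2 * ((‖H‖ + C) * ‖w n‖ ^ 2) = 1 := by
            rw [htdef, ← hK2]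
            field_simp
          nlinarith [sq_nonneg t]
        calc Real.sqrt _ ≤ Real.sqrt 1 := Real.sqrt_le_sqrt hle
          _ = 1 := Real.sqrt_one
      have hest := hweak n v hform
      rw [hinner n v] at hest
      have hval : (inner ℂ (w n) v : ℂ) = (t : ℂ) * ((‖w n‖ : ℂ) ^ 2) := by
        rw [hvdef, inner_smul_right, inner_self_eq_norm_sq_to_K]
        norm_num
      rw [hval] at hest
      have hnrm : ‖(t : ℂ) * ((‖w n‖ : ℂ) ^ 2)‖ = t * ‖w n‖ ^ 2 := by
        rw [norm_mul, Complex.norm_real, norm_pow, Complex.norm_real,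
          Real.norm_eq_abs, Real.norm_eq_abs, abs_of_pos htpos,
          abs_of_nonneg (norm_nonneg _)]
      rw [hnrm] at hest
      -- from t * ‖w n‖ ^ 2 ≤ ε n conclude ‖w n‖ ≤ ε n * K
      have ht' : t * ‖w n‖ ^ 2 = ‖w n‖ / K := by
        rw [htdef]
        field_simp
      rw [ht', div_le_iff₀ hKpos] at hest
      linarith
  -- invertibility gives a contradiction
  have hun : ∀ n, ‖u n‖ ≤ ‖((T⁻¹ : (V →L[ℂ] V)ˣ) : V →L[ℂ] V)‖ * ‖w n‖ := by
    intro n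
    have h1 : ((T⁻¹ : (V →L[ℂ] V)ˣ) : V →L[ℂ] V) ((algebraMap ℂ (V →L[ℂ] V) lam - H) (u n))
        = u n := by
      have := T.inv_mul
      calc ((T⁻¹ : (V →L[ℂ] V)ˣ) : V →L[ℂ] V) ((algebraMap ℂ (V →L[ℂ] V) lam - H) (u n))
          = (((T⁻¹ : (V →L[ℂ] V)ˣ) : V →L[ℂ] V) * (algebraMap ℂ (V →L[ℂ] V) lam - H)) (u n) :=
            rfl
        _ = u n := by rw [← hT, Units.inv_mul]; rfl
    have h2 : (algebraMap ℂ (V →L[ℂ] V) lam - H) (u n) = -(w n) := by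
      simp [hw, Algebra.algebraMap_eq_smul_one]
    calc ‖u n‖ = ‖((T⁻¹ : (V →L[ℂ] V)ˣ) : V →L[ℂ] V) (-(w n))‖ := by rw [← h1, h2]
      _ = ‖((T⁻¹ : (V →L[ℂ] V)ˣ) : V →L[ℂ] V) (w n)‖ := by rw [map_neg, norm_neg]
      _ ≤ ‖((T⁻¹ : (V →L[ℂ] V)ˣ) : V →L[ℂ] V)‖ * ‖w n‖ := ContinuousLinearMap.le_opNorm _ _
  have hzero : Tendsto (fun n => ‖u n‖) atTop (nhds 0) := by
    apply squeeze_zero (fun n => norm_nonneg _)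
      (fun n => le_trans (hun n) (mul_le_mul_of_nonneg_left (key n) (norm_nonneg _)))
    have : Tendsto (fun n => ‖((T⁻¹ : (V →L[ℂ] V)ˣ) : V →L[ℂ] V)‖ * (ε n * K)) atTop
        (nhds (‖((T⁻¹ : (V →L[ℂ] V)ˣ) : V →L[ℂ] V)‖ * (0 * K))) := by
      exact (hε.mul_const K).const_mul _
    simpa using this
  have : (1 : ℝ) = 0 := tendsto_nhds_unique hu hzero
  norm_num at this
end

section
/- Let H be a self-adjoint operator bounded below on a Hilbert space with associated nonnegative quadratic form q (after shifting, q[u] = ((H − inf σ(H))^{1/2} u, (H − inf σ(H))^{1/2} u)). Suppose u is a unit vector in the form domain, λ ∈ ℝ, and for some sequence of unit form-domain vectors u_n one has q[u_n] + inf σ(H) ‖u_n‖² − λ‖u_n‖² → 0 with q[u_n] uniformly bounded and in fact |((H)^{1/2} u_n, (H)^{1/2} v) − λ(u_n, v)| ≤ ε_n ‖v‖_h for all v in the form domain, where ε_n → 0 and ‖v‖_h² = q[v] + ‖v‖². Then λ ∈ σ(H). -/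
open RealInnerProductSpace Filter

/-- Hard direction of the form-level Weyl criterion: a sequence of approximate weak
eigenvectors, measured in the dual of the form norm
`‖v‖_h² = q[v] + ‖v‖²` (with `q[v] = ⟪(H - inf σ(H))v, v⟫ ≥ 0`), forces `λ ∈ σ(H)`. -/
theorem stmt13 {V : Type*} [NormedAddCommGroup V] [InnerProductSpace ℝ V] [CompleteSpace V]
    (H : V →L[ℝ] V) (hH : IsSelfAdjoint H)
    (hne : (spectrum ℝ H).Nonempty)
    (hbd : ∀ v : V, sInf (spectrum ℝ H) * ‖v‖ ^ 2 ≤ ⟪H v, v⟫)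
    (lam : ℝ) (u : ℕ → V) (hu : ∀ n, ‖u n‖ = 1)
    (ε : ℕ → ℝ) (hε : Tendsto ε atTop (nhds 0))
    (hconv : Tendsto (fun n => ⟪H (u n), u n⟫ - lam) atTop (nhds 0))
    (hbdd : ∃ C : ℝ, ∀ n, ⟪H (u n), u n⟫ - sInf (spectrum ℝ H) ≤ C)
    (hweak : ∀ n, ∀ v : V,
      |⟪H (u n), v⟫ - lam * ⟪u n, v⟫|
        ≤ ε n * Real.sqrt ((⟪H v, v⟫ - sInf (spectrum ℝ H) * ‖v‖ ^ 2) + ‖v‖ ^ 2)) :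
    lam ∈ spectrum ℝ H := by
  by_contra hlam
  rw [spectrum.notMem_iff] at hlam
  obtain ⟨a, ha⟩ := hlam
  set S := sInf (spectrum ℝ H) with hS
  set K := Real.sqrt (‖H‖ + |S| + 1) with hKdef
  have hK0 : 0 ≤ K := Real.sqrt_nonneg _
  set g : ℕ → V := fun n => H (u n) - lam • u n with hg
  have key : ∀ n, ‖g n‖ ≤ |ε n| * K := by
    intro n
    have h1 := hweak n (g n)
    have hinner : ⟪H (u n), g n⟫ - lam * ⟪u n, g n⟫ = ‖g n‖ ^ 2 := by
      have : ⟪H (u n) - lam • u n, g n⟫ = ‖g n‖ ^ 2 := by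
        rw [hg]; exact real_inner_self_eq_norm_sq _
      rw [← this, inner_sub_left, real_inner_smul_left]
    have hsq : Real.sqrt ((⟪H (g n), g n⟫ - S * ‖g n‖ ^ 2) + ‖g n‖ ^ 2) ≤ K * ‖g n‖ := by
      have hHv : ⟪H (g n), g n⟫ ≤ ‖H‖ * ‖g n‖ ^ 2 := by
        calc ⟪H (g n), g n⟫ ≤ ‖H (g n)‖ * ‖g n‖ := real_inner_le_norm _ _
          _ ≤ (‖H‖ * ‖g n‖) * ‖g n‖ := by gcongr; exact H.le_opNorm _
          _ = ‖H‖ * ‖g n‖ ^ 2 := by ring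
      have hSb : -(S * ‖g n‖ ^ 2) ≤ |S| * ‖g n‖ ^ 2 := by
        nlinarith [neg_abs_le S, sq_nonneg ‖g n‖]
      have h2 : (⟪H (g n), g n⟫ - S * ‖g n‖ ^ 2) + ‖g n‖ ^ 2
          ≤ (‖H‖ + |S| + 1) * ‖g n‖ ^ 2 := by nlinarith
      calc Real.sqrt ((⟪H (g n), g n⟫ - S * ‖g n‖ ^ 2) + ‖g n‖ ^ 2)
          ≤ Real.sqrt ((‖H‖ + |S| + 1) * ‖g n‖ ^ 2) := Real.sqrt_le_sqrt h2
        _ = K * ‖g n‖ := by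
            rw [Real.sqrt_mul (by positivity), Real.sqrt_sq (norm_nonneg _)]
    have h3 : ‖g n‖ ^ 2 ≤ |ε n| * (K * ‖g n‖) := by
      have h4 : ‖g n‖ ^ 2 ≤ ε n * Real.sqrt ((⟪H (g n), g n⟫ - S * ‖g n‖ ^ 2) + ‖g n‖ ^ 2) := by
        calc ‖g n‖ ^ 2 = |⟪H (u n), g n⟫ - lam * ⟪u n, g n⟫| := by
              rw [hinner]; exact (abs_of_nonneg (by positivity)).symm
          _ ≤ _ := h1
      calc ‖g n‖ ^ 2 ≤ ε n * Real.sqrt ((⟪H (g n), g n⟫ - S * ‖g n‖ ^ 2) + ‖g n‖ ^ 2) := h4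
        _ ≤ |ε n| * Real.sqrt ((⟪H (g n), g n⟫ - S * ‖g n‖ ^ 2) + ‖g n‖ ^ 2) :=
            mul_le_mul_of_nonneg_right (le_abs_self _) (Real.sqrt_nonneg _)
        _ ≤ |ε n| * (K * ‖g n‖) := by gcongr
    nlinarith [norm_nonneg (g n), abs_nonneg (ε n), hK0,
      mul_nonneg (abs_nonneg (ε n)) hK0]
  have hg0 : Tendsto (fun n => ‖g n‖) atTop (nhds 0) := by
    have h1 : Tendsto (fun n => |ε n| * K) atTop (nhds 0) := by
      simpa using hε.abs.mul_const K
    exact squeeze_zero (fun n => norm_nonneg _) key h1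
  set T : V →L[ℝ] V := (↑a⁻¹ : V →L[ℝ] V) with hT
  have hid : ∀ x : V, T (lam • x - H x) = x := by
    intro x
    have h1 : ((↑a⁻¹ : V →L[ℝ] V) * ↑a) x = x := by rw [a.inv_mul]; rfl
    rwa [ContinuousLinearMap.mul_apply, ha, ContinuousLinearMap.sub_apply,
      Algebra.algebraMap_eq_smul_one, ContinuousLinearMap.smul_apply,
      ContinuousLinearMap.one_apply] at h1
  have hone : ∀ n, (1 : ℝ) ≤ ‖T‖ * ‖g n‖ := by
    intro n
    calc (1 : ℝ) = ‖u n‖ := (hu n).symm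
      _ = ‖T (lam • u n - H (u n))‖ := by rw [hid (u n)]
      _ ≤ ‖T‖ * ‖lam • u n - H (u n)‖ := T.le_opNorm _
      _ = ‖T‖ * ‖g n‖ := by
          rw [show lam • u n - H (u n) = -(g n) by rw [hg]; simp, norm_neg]
  have hlim : Tendsto (fun n => ‖T‖ * ‖g n‖) atTop (nhds 0) := by
    simpa using hg0.const_mul ‖T‖
  obtain ⟨n, hn⟩ := (hlim.eventually_lt_const one_pos).exists
  linarith [hone n]
end
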